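/- Error bound for truncated Hot-SVD: assume L = c·W where c ∈ ℂ is nonzero and W : ℂ^p → ℂ^p is unitary for the standard Hermitian inner product. Let A ∈ ℂ_p^{I₁×⋯×I_N} be a tubal tensor of order N; for each n let A_(n) = U_n * Σ_n * V_n^H be an ordered t-SVD of the mode-n unfolding, let 1 ≤ I'_n ≤ I_n, let Ū_n ∈ ℂ_p^{I_n×I'_n} consist of the first I'_n tubal columns of U_n, and set Â := A *₁ (Ū₁*Ū₁^H) *₂ ⋯ *_N (Ū_N*Ū_N^H). Then (1) ‖A − Â‖² ≤ Σ_{n=1}^N Σ_{i=I'_n+1}^{I_n} ‖Σ_n(i,i)‖², and (2) for every tubal tensor S' ∈ ℂ_p^{I'₁×⋯×I'_N} and all partially unitary tubal matrices V'_n ∈ ℂ_p^{I_n×I'_n}, ‖A − Â‖ ≤ √N · ‖A − S' *₁ V'₁ *₂ ⋯ *_N V'_N‖. -/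

import Mathlib

/-!
STATEMENT 18: Error bound for truncated Hot-SVD: with Â built from the first I'_n left
singular tubal vectors of ordered t-SVDs of the mode-n unfoldings,
(1) ‖A − Â‖² ≤ Σ_n Σ_{i=I'_n+1}^{I_n} ‖Σ_n(i,i)‖², and
(2) ‖A − Â‖ ≤ √N · ‖A − S' *₁ V'₁ ⋯ *_N V'_N‖ for every core S' and all partially
unitary V'_n (assuming L = c·W with W unitary).
-/

open scoped BigOperators

/-- Tubal scalars of length `p`: vectors in `ℂ^p`. -/
abbrev TubalScalar (p : ℕ) := Fin p → ℂ

variable {p : ℕ}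

/-- Tensor-tensor product of tubal scalars with respect to the invertible
linear transformation `L`: `a * b := L⁻¹(L a ⊙ L b)`. -/
noncomputable def tmul (L : TubalScalar p ≃ₗ[ℂ] TubalScalar p) (a b : TubalScalar p) :
    TubalScalar p :=
  L.symm (L a * L b)

/-- Tensor-tensor product of tubal matrices: `(A*B)(i,k) := Σ_j A(i,j)*B(j,k)`. -/
noncomputable def tMul {I J K : Type*} [Fintype J] (L : TubalScalar p ≃ₗ[ℂ] TubalScalar p)
    (A : I → J → TubalScalar p) (B : J → K → TubalScalar p) : I → K → TubalScalar p :=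
  fun i k => ∑ j, tmul L (A i j) (B j k)

/-- The `n`-mode product of a tubal tensor `A` of shape `I : Fin N → ℕ` with a tubal
matrix `U ∈ ℂ_p^{J×I_n}`:
`(A *_n U)(i₁,…,i_{n−1},j,i_{n+1},…,i_N) = Σ_{i_n} A(i₁,…,i_N)*U(j,i_n)`. -/
noncomputable def modeProd {N : ℕ} (L : TubalScalar p ≃ₗ[ℂ] TubalScalar p) (I : Fin N → ℕ)
    (A : ((m : Fin N) → Fin (I m)) → TubalScalar p) (n : Fin N) (J : ℕ)
    (U : Fin J → Fin (I n) → TubalScalar p) :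
    ((m : Fin N) → Fin (Function.update I n J m)) → TubalScalar p :=
  fun idx => ∑ i : Fin (I n),
    tmul L
      (A fun m =>
        if h : m = n then Fin.cast (congrArg I h).symm i
        else Fin.cast (by rw [Function.update_of_ne h]) (idx m))
      (U (Fin.cast (by rw [Function.update_self]) (idx n)) i)

/-- The column index type of the mode-`n` unfolding: tuples
`(i₁,…,i_{n−1},i_{n+1},…,i_N)` ranging over all modes other than `n`. -/
abbrev Cidx {N : ℕ} (I : Fin N → ℕ) (n : Fin N) :=
  (m : {m : Fin N // m ≠ n}) → Fin (I m.1)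

/-- Insert the value `a` at position `n` into a tuple `c` over the remaining modes,
producing a full multi-index `(i₁,…,i_{n−1},a,i_{n+1},…,i_N)`. -/
def insertAt {N : ℕ} {I : Fin N → ℕ} (n : Fin N) (a : Fin (I n)) (c : Cidx I n) :
    (m : Fin N) → Fin (I m) :=
  fun m => if h : m = n then Fin.cast (congrArg I h).symm a else c ⟨m, h⟩

/-- The mode-`n` unfolding of a tubal tensor: the tubal matrix with rows indexed by
`i_n`, columns indexed by the tuples over the remaining modes, and entry
`A_(n)(i_n,(i₁,…,i_{n−1},i_{n+1},…,i_N)) = A(i₁,…,i_N)`. -/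
def unfold {N : ℕ} (I : Fin N → ℕ) (A : ((m : Fin N) → Fin (I m)) → TubalScalar p)
    (n : Fin N) : Fin (I n) → Cidx I n → TubalScalar p :=
  fun a c => A (insertAt n a c)

/-- The full multilinear tubal product `S *₁ U₁ *₂ U₂ ⋯ *_N U_N`, given entrywise by
`(S *₁ U₁ ⋯ *_N U_N)(i₁,…,i_N) = Σ_{j₁,…,j_N} S(j₁,…,j_N)*U₁(i₁,j₁)*⋯*U_N(i_N,j_N)`
(the tensor-tensor products of the tubal scalars are computed via `L`). -/
noncomputable def multiProd {N : ℕ} (L : TubalScalar p ≃ₗ[ℂ] TubalScalar p)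
    (I J : Fin N → ℕ) (S : ((m : Fin N) → Fin (I m)) → TubalScalar p)
    (U : (n : Fin N) → Fin (J n) → Fin (I n) → TubalScalar p) :
    ((m : Fin N) → Fin (J m)) → TubalScalar p :=
  fun idx => ∑ jdx : (m : Fin N) → Fin (I m),
    L.symm (L (S jdx) * ∏ n : Fin N, L (U n (idx n) (jdx n)))
/-- Hermitian transpose: `(L(A^H))^{(k)} = (L(A)^{(k)})^H`, i.e. entrywise
`A^H(j,i) = L⁻¹(conj(L(A(i,j))))`. -/
noncomputable def tHerm {I J : Type*} (L : TubalScalar p ≃ₗ[ℂ] TubalScalar p)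
    (A : I → J → TubalScalar p) : J → I → TubalScalar p :=
  fun j i => L.symm (star (L (A i j)))

/-- The identity tubal matrix: `e = L⁻¹((1,…,1))` on the diagonal, zero elsewhere. -/
noncomputable def tId {I : Type*} [DecidableEq I] (L : TubalScalar p ≃ₗ[ℂ] TubalScalar p) :
    I → I → TubalScalar p :=
  fun i j => if i = j then L.symm 1 else 0

/-- A square tubal matrix is unitary if `A*A^H = A^H*A = 𝓘`. -/
noncomputable def tUnitary {I : Type*} [Fintype I] [DecidableEq I]
    (L : TubalScalar p ≃ₗ[ℂ] TubalScalar p) (A : I → I → TubalScalar p) : Prop :=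
  tMul L A (tHerm L A) = tId L ∧ tMul L (tHerm L A) A = tId L

/-- The `i`-th diagonal tubal scalar of a (possibly rectangular) tubal matrix,
taken to be `0` when the diagonal position does not exist. -/
noncomputable def sdiag {a b : ℕ} (S : Fin a → Fin b → TubalScalar p) (i : Fin a) :
    TubalScalar p :=
  if h : (i : ℕ) < b then S i ⟨(i : ℕ), h⟩ else 0

/-- A tubal matrix is f-diagonal if each of its frontal slices is a diagonal matrix,
i.e. all entries off the (numeric) diagonal are the zero tubal scalar. -/
def fDiag {a b : ℕ} (S : Fin a → Fin b → TubalScalar p) : Prop :=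
  ∀ (i : Fin a) (j : Fin b), (i : ℕ) ≠ (j : ℕ) → S i j = 0

/-- A t-SVD middle factor is ordered if for each frontal slice `k` the diagonal of
`L(Σ)^{(k)}` consists of nonnegative reals in nonincreasing order. -/
noncomputable def orderedDiag {a b : ℕ} (L : TubalScalar p ≃ₗ[ℂ] TubalScalar p)
    (S : Fin a → Fin b → TubalScalar p) : Prop :=
  ∀ k : Fin p,
    (∀ i : Fin a, 0 ≤ (L (sdiag S i) k).re ∧ (L (sdiag S i) k).im = 0) ∧
    (∀ i j : Fin a, i ≤ j → (L (sdiag S j) k).re ≤ (L (sdiag S i) k).re)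

/-- The Frobenius norm: the square root of the sum, over all positions and all `p`
components, of the squared absolute values of the components. -/
noncomputable def tnorm {ι : Type*} [Fintype ι] (X : ι → TubalScalar p) : ℝ :=
  Real.sqrt (∑ i : ι, ∑ k : Fin p, ‖X i k‖ ^ 2)

/-- The Frobenius norm of a tubal scalar. -/
noncomputable def tnormS (a : TubalScalar p) : ℝ :=
  Real.sqrt (∑ k : Fin p, ‖a k‖ ^ 2)

section TSliceNS
open Complex Finset
local notation "conj'" => starRingEnd ℂ
namespace TSlice


variable {α : Type*} [Fintype α]

noncomputable def ip (g h : α → ℂ) : ℂ := ∑ i, conj' (g i) * h i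
noncomputable def sq (g : α → ℂ) : ℝ := ∑ i, ‖g i‖ ^ 2

lemma sq_nonneg' (g : α → ℂ) : 0 ≤ sq g :=
  Finset.sum_nonneg fun _ _ => by positivity

lemma sq_eq_normSq (g : α → ℂ) : sq g = ∑ i, Complex.normSq (g i) := by
  simp [sq, Complex.sq_norm]

lemma ip_self (g : α → ℂ) : ip g g = (sq g : ℂ) := by
  rw [sq_eq_normSq]
  simp only [ip, Complex.conj_mul']
  norm_cast
  simp [Complex.normSq_eq_norm_sq]

lemma ip_comm (g h : α → ℂ) : ip h g = conj' (ip g h) := by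
  simp only [ip, map_sum, map_mul, Complex.conj_conj]
  exact Finset.sum_congr rfl fun i _ => by ring

lemma ip_add_left (g g' h : α → ℂ) : ip (g + g') h = ip g h + ip g' h := by
  simp [ip, add_mul, Finset.sum_add_distrib]

lemma ip_add_right (g h h' : α → ℂ) : ip g (h + h') = ip g h + ip g h' := by
  simp [ip, mul_add, Finset.sum_add_distrib]

lemma ip_sub_left (g g' h : α → ℂ) : ip (g - g') h = ip g h - ip g' h := by
  simp [ip, sub_mul, Finset.sum_sub_distrib]

lemma ip_sub_right (g h h' : α → ℂ) : ip g (h - h') = ip g h - ip g h' := by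
  simp [ip, mul_sub, Finset.sum_sub_distrib]

lemma sq_add_of_orth {g h : α → ℂ} (hor : ip g h = 0) : sq (g + h) = sq g + sq h := by
  have h2 : ip h g = 0 := by rw [ip_comm, hor, map_zero]
  have : (sq (g + h) : ℂ) = (sq g : ℂ) + (sq h : ℂ) := by
    rw [← ip_self, ← ip_self, ← ip_self, ip_add_left, ip_add_right, ip_add_right, hor, h2]
    ring
  exact_mod_cast this

lemma ip_sum_left {n : ℕ} (D : ℕ → α → ℂ) (h : α → ℂ) :
    ip (∑ t ∈ Finset.range n, D t) h = ∑ t ∈ Finset.range n, ip (D t) h := by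
  simp only [ip]
  rw [Finset.sum_comm]
  refine Finset.sum_congr rfl fun i _ => ?_
  rw [Finset.sum_apply, map_sum, Finset.sum_mul]

lemma sq_sum_orth {n : ℕ} (D : ℕ → α → ℂ)
    (horth : ∀ s t, s < t → t < n → ip (D s) (D t) = 0) :
    sq (∑ t ∈ Finset.range n, D t) = ∑ t ∈ Finset.range n, sq (D t) := by
  induction n with
  | zero => simp [sq]
  | succ n IH =>
    rw [Finset.sum_range_succ, Finset.sum_range_succ,
      sq_add_of_orth, IH (fun s t hs ht => horth s t hs (ht.trans (Nat.lt_succ_self n)))]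
    rw [ip_sum_left]
    exact Finset.sum_eq_zero fun s hs =>
      horth s n (Finset.mem_range.mp hs) (Nat.lt_succ_self n)

/-- Key expansion: `‖z − Σ_t w_t v_t‖² = ‖z‖² − Σ_t |m_t|² + Σ_t |w_t − m_t|²`. -/
lemma expand_eq {r : ℕ} (v : Fin r → α → ℂ)
    (hv : ∀ t t', ∑ i, conj' (v t i) * v t' i = if t = t' then 1 else 0)
    (z : α → ℂ) (w : Fin r → ℂ) :
    sq (fun i => z i - ∑ t, w t * v t i)
      = sq z - (∑ t, ‖∑ i, conj' (v t i) * z i‖ ^ 2)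
        + ∑ t, ‖w t - ∑ i, conj' (v t i) * z i‖ ^ 2 := by
  set m : Fin r → ℂ := fun t => ∑ i, conj' (v t i) * z i with hm
  set y : α → ℂ := fun i => ∑ t, w t * v t i with hy
  have hzy : ip z y = ∑ t, w t * conj' (m t) := by
    simp only [ip, hy, mul_sum]
    rw [Finset.sum_comm]
    refine Finset.sum_congr rfl fun t _ => ?_
    rw [hm]
    simp only [map_sum, map_mul, Complex.conj_conj, Finset.mul_sum]
    exact Finset.sum_congr rfl fun i _ => by ring
  have hyz : ip y z = ∑ t, conj' (w t) * m t := by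
    rw [ip_comm, hzy, map_sum]
    exact Finset.sum_congr rfl fun t _ => by simp [map_mul]
  have hyy : ip y y = ∑ t, conj' (w t) * w t := by
    have step : ∀ i, conj' (y i) * y i
        = ∑ t, ∑ t', (conj' (w t) * w t') * (conj' (v t i) * v t' i) := by
      intro i
      simp only [hy, map_sum, map_mul, Finset.sum_mul_sum]
      exact Finset.sum_congr rfl fun t _ => Finset.sum_congr rfl fun t' _ => by ring
    simp only [ip, step]
    rw [Finset.sum_comm]
    refine Finset.sum_congr rfl fun t _ => ?_
    rw [Finset.sum_comm]
    have : ∀ t', ∑ i, (conj' (w t) * w t') * (conj' (v t i) * v t' i)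
        = (conj' (w t) * w t') * ∑ i, conj' (v t i) * v t' i := by
      intro t'; rw [Finset.mul_sum]
    simp only [this, hv, mul_ite, mul_one, mul_zero, Finset.sum_ite_eq, Finset.sum_ite_eq',
      Finset.mem_univ, if_true]
  have habs : ∀ ζ : ℂ, ((‖ζ‖ : ℂ))^2 = conj' ζ * ζ := by
    intro ζ
    rw [Complex.conj_mul']
  have key : (sq (fun i => z i - y i) : ℂ)
      = (sq z : ℂ) - (∑ t, (‖m t‖:ℂ) ^ 2) + ∑ t, (‖w t - m t‖:ℂ) ^ 2 := by
    have e1 : (sq (fun i => z i - y i) : ℂ) = ip z z - ip z y - ip y z + ip y y := by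
      rw [← ip_self]
      have : ip (z - y) (z - y) = ip z z - ip z y - ip y z + ip y y := by
        rw [ip_sub_left, ip_sub_right, ip_sub_right]; ring
      rw [← this]; rfl
    rw [e1, hzy, hyz, hyy, ← ip_self]
    simp only [habs, map_sub]
    have expand : ∀ t, (conj' (w t) - conj' (m t)) * (w t - m t)
        = conj' (w t) * w t - w t * conj' (m t) - conj' (w t) * m t + conj' (m t) * m t := by
      intro t; ring
    simp only [expand, Finset.sum_add_distrib, Finset.sum_sub_distrib]
    ring
  have := key
  push_cast at this
  exact_mod_cast this

/-- Bessel's inequality for an orthonormal family. -/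
lemma bessel {r : ℕ} (v : Fin r → α → ℂ)
    (hv : ∀ t t', ∑ i, conj' (v t i) * v t' i = if t = t' then 1 else 0)
    (z : α → ℂ) :
    ∑ t, ‖∑ i, conj' (v t i) * z i‖ ^ 2 ≤ sq z := by
  have h := expand_eq v hv z (fun t => ∑ i, conj' (v t i) * z i)
  simp only [sub_self, map_zero, norm_zero] at h
  have h0 := sq_nonneg' (fun i => z i - ∑ t, (∑ i, conj' (v t i) * z i) * v t i)
  rw [h] at h0
  simp only [ne_eq, OfNat.ofNat_ne_zero, not_false_eq_true, zero_pow,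
    Finset.sum_const_zero, add_zero] at h0
  linarith

/-- Lower bound: `‖z − y‖² ≥ ‖z‖² − Σ_t |⟨v_t,z⟩|²` for `y` in the span of the `v_t`. -/
lemma expand_lower {r : ℕ} (v : Fin r → α → ℂ)
    (hv : ∀ t t', ∑ i, conj' (v t i) * v t' i = if t = t' then 1 else 0)
    (z : α → ℂ) (w : Fin r → ℂ) :
    sq z - (∑ t, ‖∑ i, conj' (v t i) * z i‖ ^ 2)
      ≤ sq (fun i => z i - ∑ t, w t * v t i) := by
  rw [expand_eq v hv z w]
  have : (0:ℝ) ≤ ∑ t, ‖w t - ∑ i, conj' (v t i) * z i‖ ^ 2 :=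
    Finset.sum_nonneg fun _ _ => by positivity
  linarith


lemma card_filter_lt {n r : ℕ} (hr : r ≤ n) :
    ((Finset.univ : Finset (Fin n)).filter (fun a : Fin n => (a:ℕ) < r)).card = r := by
  have : ((Finset.univ : Finset (Fin n)).filter (fun a : Fin n => (a:ℕ) < r))
      = Finset.map ⟨Fin.castLE hr, Fin.castLE_injective hr⟩ Finset.univ := by
    ext a
    simp only [Finset.mem_filter, Finset.mem_univ, true_and, Finset.mem_map,
      Function.Embedding.coeFn_mk]
    constructor
    · intro h; exact ⟨⟨a, h⟩, by apply Fin.ext; rfl⟩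
    · rintro ⟨b, rfl⟩; exact b.isLt
  rw [this, Finset.card_map, Finset.card_univ, Fintype.card_fin]

lemma sum_weight {n : ℕ} (q τ : Fin n → ℝ) (r : ℕ) (hr : r ≤ n)
    (hq0 : ∀ i, 0 ≤ q i) (hmono : ∀ i j : Fin n, i ≤ j → q j ≤ q i)
    (hτ0 : ∀ a, 0 ≤ τ a) (hτ1 : ∀ a, τ a ≤ 1) (hτs : ∑ a, τ a ≤ (r:ℝ)) :
    ∑ a, q a * τ a ≤ ∑ a ∈ Finset.univ.filter (fun a : Fin n => (a:ℕ) < r), q a := by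
  set s : ℝ := if h : r < n then q ⟨r, h⟩ else 0 with hs
  have hs0 : 0 ≤ s := by
    rw [hs]
    by_cases hrn : r < n
    · rw [dif_pos hrn]; exact hq0 _
    · rw [dif_neg hrn]
  have hles : ∀ a : Fin n, r ≤ (a:ℕ) → q a ≤ s := by
    intro a ha
    have hrn : r < n := lt_of_le_of_lt ha a.isLt
    rw [hs, dif_pos hrn]
    exact hmono ⟨r, hrn⟩ a (by simpa [Fin.le_def] using ha)
  have hges : ∀ a : Fin n, (a:ℕ) < r → s ≤ q a := by
    intro a ha
    rw [hs]
    by_cases hrn : r < n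
    · rw [dif_pos hrn]
      exact hmono a ⟨r, hrn⟩ (by simp [Fin.le_def]; omega)
    · rw [dif_neg hrn]; exact hq0 a
  have hcard := card_filter_lt (n := n) hr
  have step1 : ∑ a, q a * τ a = (∑ a, (q a - s) * τ a) + s * ∑ a, τ a := by
    rw [Finset.mul_sum, ← Finset.sum_add_distrib]
    exact Finset.sum_congr rfl fun a _ => by ring
  have step2 : ∑ a, (q a - s) * τ a
      ≤ ∑ a ∈ Finset.univ.filter (fun a : Fin n => (a:ℕ) < r), (q a - s) := by
    rw [← Finset.sum_filter_add_sum_filter_not Finset.univ (fun a : Fin n => (a:ℕ) < r)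
      (fun a => (q a - s) * τ a)]
    have t1 : ∑ a ∈ Finset.univ.filter (fun a : Fin n => (a:ℕ) < r), (q a - s) * τ a
        ≤ ∑ a ∈ Finset.univ.filter (fun a : Fin n => (a:ℕ) < r), (q a - s) := by
      refine Finset.sum_le_sum fun a ha => ?_
      have := hges a (by simpa using (Finset.mem_filter.mp ha).2)
      nlinarith [hτ0 a, hτ1 a]
    have t2 : ∑ a ∈ Finset.univ.filter (fun a : Fin n => ¬ (a:ℕ) < r), (q a - s) * τ a ≤ 0 := by
      refine Finset.sum_nonpos fun a ha => ?_
      have := hles a (by simpa using (Finset.mem_filter.mp ha).2)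
      nlinarith [hτ0 a]
    linarith
  have step3 : ∑ a ∈ Finset.univ.filter (fun a : Fin n => (a:ℕ) < r), (q a - s)
      = (∑ a ∈ Finset.univ.filter (fun a : Fin n => (a:ℕ) < r), q a) - r * s := by
    rw [Finset.sum_sub_distrib, Finset.sum_const, hcard, nsmul_eq_mul]
  have hfin : s * ∑ a, τ a ≤ s * r := mul_le_mul_of_nonneg_left hτs hs0
  calc ∑ a, q a * τ a = (∑ a, (q a - s) * τ a) + s * ∑ a, τ a := step1
    _ ≤ ((∑ a ∈ Finset.univ.filter (fun a : Fin n => (a:ℕ) < r), q a) - r * s) + s * r := by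
        rw [← step3]; linarith
    _ = _ := by ring

end TSlice

namespace TSlice
variable {N : ℕ} {I : Fin N → ℕ}
lemma insertAt_self (n : Fin N) (a : Fin (I n)) (c : Cidx I n) :
    insertAt n a c n = a := by
  simp only [insertAt, dif_pos rfl]
  rfl

lemma insertAt_other (n : Fin N) (a : Fin (I n)) (c : Cidx I n) (m : Fin N) (h : m ≠ n) :
    insertAt n a c m = c ⟨m, h⟩ := by
  simp only [insertAt, dif_neg h]

def modeEquiv (I : Fin N → ℕ) (n : Fin N) :
    ((m : Fin N) → Fin (I m)) ≃ Fin (I n) × Cidx I n where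
  toFun idx := (idx n, fun m => idx m.1)
  invFun pr := insertAt n pr.1 pr.2
  left_inv idx := by
    funext m
    by_cases h : m = n
    · subst h; exact insertAt_self m _ _
    · exact insertAt_other n _ _ m h
  right_inv pr := by
    refine Prod.ext ?_ ?_
    · exact insertAt_self n pr.1 pr.2
    · funext m
      exact insertAt_other n pr.1 pr.2 m.1 m.2

lemma sum_insertAt {M : Type*} [AddCommMonoid M] (n : Fin N)
    (f : ((m : Fin N) → Fin (I m)) → M) :
    ∑ idx, f idx = ∑ i : Fin (I n), ∑ c : Cidx I n, f (insertAt n i c) := by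
  rw [← Equiv.sum_comp (modeEquiv I n).symm f, Fintype.sum_prod_type]
  rfl

lemma update_insertAt (n : Fin N) (a j : Fin (I n)) (c : Cidx I n) :
    Function.update (insertAt n a c) n j = insertAt n j c := by
  funext m
  by_cases h : m = n
  · subst h; rw [Function.update_self, insertAt_self]
  · rw [Function.update_of_ne h, insertAt_other n _ _ m h, insertAt_other n _ _ m h]

/-- Mode-`n` application of a matrix `P` to a tensor `g`. -/
noncomputable def Qop (n : Fin N) (P : Fin (I n) → Fin (I n) → ℂ)
    (g : ((m : Fin N) → Fin (I m)) → ℂ) : ((m : Fin N) → Fin (I m)) → ℂ :=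
  fun idx => ∑ j, P (idx n) j * g (Function.update idx n j)

lemma Qop_sub (n : Fin N) (P : Fin (I n) → Fin (I n) → ℂ)
    (g h : ((m : Fin N) → Fin (I m)) → ℂ) :
    Qop n P (g - h) = Qop n P g - Qop n P h := by
  funext idx
  simp [Qop, mul_sub, Finset.sum_sub_distrib]

/-- The self-inverse shuffle `(idx, j) ↦ (update idx n j, idx n)`. -/
def updEquiv (I : Fin N → ℕ) (n : Fin N) :
    (((m : Fin N) → Fin (I m)) × Fin (I n)) ≃ (((m : Fin N) → Fin (I m)) × Fin (I n)) where
  toFun p := (Function.update p.1 n p.2, p.1 n)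
  invFun p := (Function.update p.1 n p.2, p.1 n)
  left_inv p := by
    refine Prod.ext ?_ ?_
    · simp only []
      rw [Function.update_idem, Function.update_eq_self]
    · simp only [Function.update_self]
  right_inv p := by
    refine Prod.ext ?_ ?_
    · simp only []
      rw [Function.update_idem, Function.update_eq_self]
    · simp only [Function.update_self]

lemma Qop_adj (n : Fin N) (P : Fin (I n) → Fin (I n) → ℂ)
    (hPh : ∀ i j, conj' (P i j) = P j i)
    (g h : ((m : Fin N) → Fin (I m)) → ℂ) :
    ip (Qop n P g) h = ip g (Qop n P h) := by
  have lhs : ip (Qop n P g) h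
      = ∑ p : ((m : Fin N) → Fin (I m)) × Fin (I n),
          conj' (P (p.1 n) p.2) * conj' (g (Function.update p.1 n p.2)) * h p.1 := by
    rw [ip, Fintype.sum_prod_type]
    refine Finset.sum_congr rfl fun idx _ => ?_
    simp only [Qop, map_sum, map_mul, Finset.sum_mul]
  rw [lhs, ← Equiv.sum_comp (updEquiv I n)
    (fun p : ((m : Fin N) → Fin (I m)) × Fin (I n) =>
      conj' (P (p.1 n) p.2) * conj' (g (Function.update p.1 n p.2)) * h p.1)]
  rw [ip, Fintype.sum_prod_type]
  refine Finset.sum_congr rfl fun idx _ => ?_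
  simp only [updEquiv, Equiv.coe_fn_mk, Function.update_self, Function.update_idem,
    Function.update_eq_self, Qop, Finset.mul_sum]
  refine Finset.sum_congr rfl fun j _ => ?_
  rw [hPh]
  ring

lemma Qop_idem (n : Fin N) (P : Fin (I n) → Fin (I n) → ℂ)
    (hP2 : ∀ i j, ∑ l, P i l * P l j = P i j)
    (g : ((m : Fin N) → Fin (I m)) → ℂ) :
    Qop n P (Qop n P g) = Qop n P g := by
  funext idx
  simp only [Qop, Function.update_self, Function.update_idem]
  have expand : ∀ x, P (idx n) x * ∑ y, P x y * g (Function.update idx n y)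
      = ∑ y, P (idx n) x * P x y * g (Function.update idx n y) := by
    intro x; rw [Finset.mul_sum]; exact Finset.sum_congr rfl fun _ _ => by ring
  simp only [expand]
  rw [Finset.sum_comm]
  refine Finset.sum_congr rfl fun j _ => ?_
  rw [← hP2 (idx n) j, Finset.sum_mul]



lemma absSq (ζ : ℂ) : ((‖ζ‖ : ℂ))^2 = conj' ζ * ζ := by
  rw [Complex.conj_mul']

lemma Qop_comm (n m : Fin N) (hnm : n ≠ m) (P : Fin (I n) → Fin (I n) → ℂ)
    (P' : Fin (I m) → Fin (I m) → ℂ) (g : ((m : Fin N) → Fin (I m)) → ℂ) :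
    Qop n P (Qop m P' g) = Qop m P' (Qop n P g) := by
  funext idx
  simp only [Qop, Function.update_of_ne hnm.symm, Function.update_of_ne hnm, Finset.mul_sum]
  rw [Finset.sum_comm]
  refine Finset.sum_congr rfl fun l _ => Finset.sum_congr rfl fun j _ => ?_
  rw [Function.update_comm hnm]
  ring

lemma ip_zero_left (h : ((m : Fin N) → Fin (I m)) → ℂ) : ip (0 : ((m : Fin N) → Fin (I m)) → ℂ) h = 0 := by
  simp [ip]

lemma Qop_contract (n : Fin N) (P : Fin (I n) → Fin (I n) → ℂ)
    (hPh : ∀ i j, conj' (P i j) = P j i)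
    (hP2 : ∀ i j, ∑ l, P i l * P l j = P i j)
    (g : ((m : Fin N) → Fin (I m)) → ℂ) :
    sq (Qop n P g) ≤ sq g := by
  have horth : ip (Qop n P g) (g - Qop n P g) = 0 := by
    rw [Qop_adj n P hPh, Qop_sub, Qop_idem n P hP2, sub_self]
    simp [ip]
  have hdec : sq g = sq (Qop n P g) + sq (g - Qop n P g) := by
    have h1 := sq_add_of_orth horth
    rw [add_sub_cancel] at h1
    exact h1
  have := sq_nonneg' (g - Qop n P g)
  linarith

lemma sum_absSq_c {α : Type*} [Fintype α] (f : α → ℂ) :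
    ((∑ i, ‖f i‖ ^ 2 : ℝ) : ℂ) = ∑ i, conj' (f i) * f i := by
  push_cast
  simp only [absSq]

lemma sq_comb {α β : Type*} [Fintype α] [Fintype β] [DecidableEq α]
    (u : α → α → ℂ)
    (hu2 : ∀ i j, ∑ t, conj' (u t i) * u t j = if i = j then 1 else 0)
    (g : α → β → ℂ) (T : Finset α) :
    ∑ i, ∑ j, ‖∑ t ∈ T, u i t * g t j‖ ^ 2
      = ∑ t ∈ T, ∑ j, ‖g t j‖ ^ 2 := by
  have key : ((∑ i, ∑ j, ‖∑ t ∈ T, u i t * g t j‖ ^ 2 : ℝ) : ℂ)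
      = ((∑ t ∈ T, ∑ j, ‖g t j‖ ^ 2 : ℝ) : ℂ) := by
    push_cast
    simp only [absSq]
    have e2 : ∀ (j : β) (i : α), conj' (∑ t ∈ T, u i t * g t j) * (∑ t' ∈ T, u i t' * g t' j)
        = ∑ t ∈ T, ∑ t' ∈ T, (conj' (u i t) * conj' (g t j)) * (u i t' * g t' j) := by
      intro j i
      rw [map_sum, Finset.sum_mul_sum]
      exact Finset.sum_congr rfl fun t _ => Finset.sum_congr rfl fun t' _ => by
        rw [map_mul]
    have inner : ∀ j : β,
        ∑ i, ∑ t ∈ T, ∑ t' ∈ T, (conj' (u i t) * conj' (g t j)) * (u i t' * g t' j)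
          = ∑ t ∈ T, conj' (g t j) * g t j := by
      intro j
      have e1 : ∑ i, ∑ t ∈ T, ∑ t' ∈ T, (conj' (u i t) * conj' (g t j)) * (u i t' * g t' j)
          = ∑ t ∈ T, ∑ t' ∈ T, (conj' (g t j) * g t' j) * ∑ i, conj' (u i t) * u i t' := by
        rw [Finset.sum_comm]
        refine Finset.sum_congr rfl fun t _ => ?_
        rw [Finset.sum_comm]
        refine Finset.sum_congr rfl fun t' _ => ?_
        rw [Finset.mul_sum]
        exact Finset.sum_congr rfl fun i _ => by ring
      rw [e1]
      simp only [hu2, mul_ite, mul_one, mul_zero]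
      refine Finset.sum_congr rfl fun t ht => ?_
      rw [Finset.sum_ite_eq T t (fun t' => conj' (g t j) * g t' j), if_pos ht]
    simp only [e2]
    rw [Finset.sum_comm]
    refine Eq.trans (Finset.sum_congr rfl fun j _ => inner j) ?_
    exact Finset.sum_comm
  exact_mod_cast key

lemma sq_comb2 {α β : Type*} [Fintype α] [Fintype β] [DecidableEq α] (g : α → β → ℂ)
    (hg : ∀ t t', t ≠ t' → ∑ j, conj' (g t j) * g t' j = 0) (μ : α → ℂ) :
    ∑ j, ‖∑ a, μ a * g a j‖ ^ 2
      = ∑ a, ‖μ a‖ ^ 2 * ∑ j, ‖g a j‖ ^ 2 := by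
  have key : ((∑ j, ‖∑ a, μ a * g a j‖ ^ 2 : ℝ) : ℂ)
      = ∑ a, ((‖μ a‖ : ℂ)) ^ 2 * ∑ j, ((‖g a j‖ : ℂ)) ^ 2 := by
    push_cast
    simp only [absSq]
    have e2 : ∀ (j : β), conj' (∑ a, μ a * g a j) * (∑ a', μ a' * g a' j)
        = ∑ a, ∑ a', (conj' (μ a) * μ a') * (conj' (g a j) * g a' j) := by
      intro j
      rw [map_sum, Finset.sum_mul_sum]
      exact Finset.sum_congr rfl fun a _ => Finset.sum_congr rfl fun a' _ => by
        rw [map_mul]; ring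
    simp only [e2]
    rw [Finset.sum_comm]
    refine Finset.sum_congr rfl fun a _ => ?_
    rw [Finset.sum_comm]
    have e3 : ∀ a', ∑ j, (conj' (μ a) * μ a') * (conj' (g a j) * g a' j)
        = (conj' (μ a) * μ a') * ∑ j, conj' (g a j) * g a' j := by
      intro a'; rw [Finset.mul_sum]
    simp only [e3]
    have h1 : ∀ a' ∈ Finset.univ, a' ≠ a →
        (conj' (μ a) * μ a') * (∑ j, conj' (g a j) * g a' j) = 0 := by
      intro a' _ ha'
      rw [hg a a' (Ne.symm ha'), mul_zero]
    rw [Finset.sum_eq_single a h1 (fun h => absurd (Finset.mem_univ a) h)]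
  have key2 : ((∑ a, ‖μ a‖ ^ 2 * ∑ j, ‖g a j‖ ^ 2 : ℝ) : ℂ)
      = ∑ a, ((‖μ a‖ : ℂ)) ^ 2 * ∑ j, ((‖g a j‖ : ℂ)) ^ 2 := by
    push_cast
    rfl
  rw [← key2] at key
  exact_mod_cast key


/-- Row `t` of `σ vᴴ`. -/
noncomputable def grow {In Mn : ℕ} (sg : Fin In → Fin Mn → ℂ) (v : Fin Mn → Fin Mn → ℂ) :
    Fin In → Fin Mn → ℂ := fun t j => ∑ b, sg t b * conj' (v j b)

noncomputable def qrow {In Mn : ℕ} (sg : Fin In → Fin Mn → ℂ) : Fin In → ℝ :=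
  fun t => ∑ b, ‖sg t b‖ ^ 2

lemma conj_ite_delta {γ : Type*} [DecidableEq γ] (i j : γ) :
    conj' (if i = j then (1:ℂ) else 0) = if i = j then 1 else 0 := by
  split <;> simp

lemma grow_inner {In Mn : ℕ} (sg : Fin In → Fin Mn → ℂ) (v : Fin Mn → Fin Mn → ℂ)
    (hv2 : ∀ i j, ∑ t, conj' (v t i) * v t j = if i = j then 1 else 0) (t t' : Fin In) :
    ∑ j, conj' (grow sg v t j) * grow sg v t' j = ∑ b, conj' (sg t b) * sg t' b := by
  have expand : ∀ j, conj' (grow sg v t j) * grow sg v t' j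
      = ∑ b, ∑ b', (conj' (sg t b) * sg t' b') * (v j b * conj' (v j b')) := by
    intro j
    simp only [grow, map_sum, map_mul, Complex.conj_conj, Finset.sum_mul_sum]
    exact Finset.sum_congr rfl fun b _ => Finset.sum_congr rfl fun b' _ => by ring
  simp only [expand]
  rw [Finset.sum_comm]
  refine Finset.sum_congr rfl fun b _ => ?_
  rw [Finset.sum_comm]
  have hvv : ∀ b', ∑ j, v j b * conj' (v j b') = if b = b' then 1 else 0 := by
    intro b'
    have : ∑ j, v j b * conj' (v j b') = conj' (∑ j, conj' (v j b) * v j b') := by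
      rw [map_sum]
      exact Finset.sum_congr rfl fun j _ => by rw [map_mul, Complex.conj_conj]
    rw [this, hv2 b b', conj_ite_delta]
  have factor : ∀ b', ∑ j, (conj' (sg t b) * sg t' b') * (v j b * conj' (v j b'))
      = (conj' (sg t b) * sg t' b') * ∑ j, v j b * conj' (v j b') := by
    intro b'; rw [Finset.mul_sum]
  simp only [factor, hvv, mul_ite, mul_one, mul_zero, Finset.sum_ite_eq, Finset.mem_univ,
    if_true]

lemma grow_zero {In Mn : ℕ} (sg : Fin In → Fin Mn → ℂ) (v : Fin Mn → Fin Mn → ℂ)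
    (hv2 : ∀ i j, ∑ t, conj' (v t i) * v t j = if i = j then 1 else 0)
    (hdiag : ∀ (i : Fin In) (j : Fin Mn), (i:ℕ) ≠ (j:ℕ) → sg i j = 0)
    (t t' : Fin In) (htt : t ≠ t') :
    ∑ j, conj' (grow sg v t j) * grow sg v t' j = 0 := by
  rw [grow_inner sg v hv2]
  refine Finset.sum_eq_zero fun b _ => ?_
  by_cases hb : (t:ℕ) = (b:ℕ)
  · have h2 : (t':ℕ) ≠ (b:ℕ) := fun h => htt (Fin.ext (hb.trans h.symm))
    rw [hdiag t' b h2, mul_zero]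
  · rw [hdiag t b hb, map_zero, zero_mul]

lemma grow_q {In Mn : ℕ} (sg : Fin In → Fin Mn → ℂ) (v : Fin Mn → Fin Mn → ℂ)
    (hv2 : ∀ i j, ∑ t, conj' (v t i) * v t j = if i = j then 1 else 0) (t : Fin In) :
    ∑ j, ‖grow sg v t j‖ ^ 2 = qrow sg t := by
  have h2 : ((∑ j, ‖grow sg v t j‖ ^ 2 : ℝ) : ℂ) = ((qrow sg t : ℝ) : ℂ) := by
    rw [sum_absSq_c, grow_inner sg v hv2, qrow, sum_absSq_c]
  exact_mod_cast h2

/-- The truncated projector `Ū Ūᴴ`. -/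
noncomputable def Pmat {In : ℕ} (r : ℕ) (hr : r ≤ In) (u : Fin In → Fin In → ℂ) :
    Fin In → Fin In → ℂ :=
  fun i j => ∑ t : Fin r, u i (Fin.castLE hr t) * conj' (u j (Fin.castLE hr t))

lemma Pmat_herm {In : ℕ} (r : ℕ) (hr : r ≤ In) (u : Fin In → Fin In → ℂ) (i j : Fin In) :
    conj' (Pmat r hr u i j) = Pmat r hr u j i := by
  simp only [Pmat, map_sum, map_mul, Complex.conj_conj]
  exact Finset.sum_congr rfl fun t _ => by ring

lemma Pmat_col {In : ℕ} (r : ℕ) (hr : r ≤ In) (u : Fin In → Fin In → ℂ)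
    (hu2 : ∀ i j, ∑ t, conj' (u t i) * u t j = if i = j then 1 else 0)
    (i t : Fin In) :
    ∑ l, Pmat r hr u i l * u l t = if (t:ℕ) < r then u i t else 0 := by
  have e1 : ∑ l, Pmat r hr u i l * u l t
      = ∑ t' : Fin r, u i (Fin.castLE hr t') * ∑ l, conj' (u l (Fin.castLE hr t')) * u l t := by
    simp only [Pmat, Finset.sum_mul]
    rw [Finset.sum_comm]
    refine Finset.sum_congr rfl fun t' _ => ?_
    rw [Finset.mul_sum]
    exact Finset.sum_congr rfl fun l _ => by ring
  rw [e1]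
  simp only [hu2, mul_ite, mul_one, mul_zero]
  by_cases h : (t:ℕ) < r
  · rw [if_pos h, Finset.sum_eq_single (⟨(t:ℕ), h⟩ : Fin r)]
    · rw [if_pos (Fin.ext rfl : Fin.castLE hr ⟨(t:ℕ), h⟩ = t)]
      all_goals try exact congrArg (u i) (Fin.ext rfl)
    · intro t' _ ht'
      rw [if_neg]
      intro hc
      exact ht' (Fin.ext (by simpa [Fin.ext_iff] using hc))
    · intro h'; exact absurd (Finset.mem_univ _) h'
  · rw [if_neg h]
    refine Finset.sum_eq_zero fun t' _ => ?_
    rw [if_neg]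
    intro hc
    apply h
    have : ((Fin.castLE hr t' : Fin In) : ℕ) = (t : ℕ) := by rw [hc]
    simp only [Fin.coe_castLE] at this
    have h2 := t'.isLt
    omega

lemma Pmat_idem {In : ℕ} (r : ℕ) (hr : r ≤ In) (u : Fin In → Fin In → ℂ)
    (hu2 : ∀ i j, ∑ t, conj' (u t i) * u t j = if i = j then 1 else 0)
    (i j : Fin In) :
    ∑ l, Pmat r hr u i l * Pmat r hr u l j = Pmat r hr u i j := by
  have e0 : ∀ l, Pmat r hr u l j
      = ∑ t : Fin r, u l (Fin.castLE hr t) * conj' (u j (Fin.castLE hr t)) := fun l => rfl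
  calc ∑ l, Pmat r hr u i l * Pmat r hr u l j
      = ∑ t : Fin r, (∑ l, Pmat r hr u i l * u l (Fin.castLE hr t))
          * conj' (u j (Fin.castLE hr t)) := by
        simp only [e0, Finset.mul_sum]
        rw [Finset.sum_comm]
        refine Finset.sum_congr rfl fun t _ => ?_
        rw [Finset.sum_mul]
        exact Finset.sum_congr rfl fun l _ => by ring
    _ = ∑ t : Fin r, u i (Fin.castLE hr t) * conj' (u j (Fin.castLE hr t)) := by
        refine Finset.sum_congr rfl fun t _ => ?_
        rw [Pmat_col r hr u hu2 i (Fin.castLE hr t), if_pos (by simpa using t.isLt)]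
    _ = Pmat r hr u i j := rfl

lemma conj_row_orthonormal {In : ℕ} (u : Fin In → Fin In → ℂ)
    (hu2 : ∀ i j, ∑ t, conj' (u t i) * u t j = if i = j then 1 else 0)
    (s s' : Fin In) :
    ∑ i, conj' (conj' (u i s)) * conj' (u i s') = if s = s' then 1 else 0 := by
  have : ∑ i, conj' (conj' (u i s)) * conj' (u i s') = conj' (∑ i, conj' (u i s) * u i s') := by
    rw [map_sum]
    exact Finset.sum_congr rfl fun i _ => by rw [map_mul, Complex.conj_conj]
  rw [this, hu2 s s', conj_ite_delta]

lemma col_norm_one {In : ℕ} (u : Fin In → Fin In → ℂ)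
    (hu2 : ∀ i j, ∑ t, conj' (u t i) * u t j = if i = j then 1 else 0)
    (s : Fin In) : ∑ i, ‖u i s‖ ^ 2 = 1 := by
  have h := hu2 s s
  rw [if_pos rfl] at h
  have h2 : ((∑ i, ‖u i s‖ ^ 2 : ℝ) : ℂ) = ((1:ℝ) : ℂ) := by
    rw [sum_absSq_c, h]; norm_num
  exact_mod_cast h2



theorem slice_main
    (a : ((m : Fin N) → Fin (I m)) → ℂ)
    (Mdim : Fin N → ℕ) (e : (n : Fin N) → Cidx I n ≃ Fin (Mdim n))
    (u : (n : Fin N) → Fin (I n) → Fin (I n) → ℂ)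
    (sg : (n : Fin N) → Fin (I n) → Fin (Mdim n) → ℂ)
    (v : (n : Fin N) → Fin (Mdim n) → Fin (Mdim n) → ℂ)
    (hu2 : ∀ n i j, ∑ t, conj' (u n t i) * u n t j = if i = j then 1 else 0)
    (hv2 : ∀ n i j, ∑ t, conj' (v n t i) * v n t j = if i = j then 1 else 0)
    (hdiag : ∀ n (i : Fin (I n)) (j : Fin (Mdim n)), (i:ℕ) ≠ (j:ℕ) → sg n i j = 0)
    (hmono : ∀ n (i j : Fin (I n)), i ≤ j → qrow (sg n) j ≤ qrow (sg n) i)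
    (hfact : ∀ n (i : Fin (I n)) (c : Cidx I n),
        a (insertAt n i c) = ∑ t, u n i t * grow (sg n) (v n) t (e n c))
    (I' : Fin N → ℕ) (hI' : ∀ n, I' n ≤ I n)
    (ahat : ((m : Fin N) → Fin (I m)) → ℂ)
    (hahat : ∀ idx, ahat idx
        = ∑ jdx, a jdx * ∏ n, Pmat (I' n) (hI' n) (u n) (idx n) (jdx n)) :
    (sq (a - ahat) ≤ ∑ n, ∑ i ∈ Finset.univ.filter (fun i : Fin (I n) => ¬ (i:ℕ) < I' n),
        qrow (sg n) i)
    ∧ ∀ (b : ((m : Fin N) → Fin (I m)) → ℂ),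
      (∀ n, ∃ (v' : Fin (I n) → Fin (I' n) → ℂ) (w : Fin (I' n) → Cidx I n → ℂ),
        (∀ t t', ∑ i, conj' (v' i t) * v' i t' = if t = t' then 1 else 0) ∧
        ∀ i c, b (insertAt n i c) = ∑ t, v' i t * w t c) →
      sq (a - ahat) ≤ N * sq (a - b) := by
  classical
  have hQa : ∀ (n : Fin N) (i : Fin (I n)) (c : Cidx I n),
      Qop n (Pmat (I' n) (hI' n) (u n)) a (insertAt n i c)
        = ∑ t ∈ Finset.univ.filter (fun t : Fin (I n) => (t:ℕ) < I' n),
            u n i t * grow (sg n) (v n) t (e n c) := by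
    intro n i c
    calc Qop n (Pmat (I' n) (hI' n) (u n)) a (insertAt n i c)
        = ∑ j, Pmat (I' n) (hI' n) (u n) i j * ∑ t, u n j t * grow (sg n) (v n) t (e n c) := by
          simp only [Qop, insertAt_self, update_insertAt]
          exact Finset.sum_congr rfl fun j _ => by rw [hfact n j c]
      _ = ∑ t : Fin (I n), (∑ j, Pmat (I' n) (hI' n) (u n) i j * u n j t)
            * grow (sg n) (v n) t (e n c) := by
          simp only [Finset.mul_sum]
          rw [Finset.sum_comm]
          refine Finset.sum_congr rfl fun t _ => ?_
          rw [Finset.sum_mul]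
          exact Finset.sum_congr rfl fun j _ => by ring
      _ = ∑ t : Fin (I n), (if (t:ℕ) < I' n then u n i t else 0) * grow (sg n) (v n) t (e n c) := by
          refine Finset.sum_congr rfl fun t _ => ?_
          rw [Pmat_col _ _ _ (hu2 n)]
      _ = _ := by
          rw [Finset.sum_filter]
          exact Finset.sum_congr rfl fun t _ => by rw [ite_mul, zero_mul]
  have hRa : ∀ (n : Fin N) (i : Fin (I n)) (c : Cidx I n),
      (a - Qop n (Pmat (I' n) (hI' n) (u n)) a) (insertAt n i c)
        = ∑ t ∈ Finset.univ.filter (fun t : Fin (I n) => ¬ (t:ℕ) < I' n),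
            u n i t * grow (sg n) (v n) t (e n c) := by
    intro n i c
    have hsplit := Finset.sum_filter_add_sum_filter_not Finset.univ
      (fun t : Fin (I n) => (t:ℕ) < I' n) (fun t => u n i t * grow (sg n) (v n) t (e n c))
    rw [Pi.sub_apply, hfact n i c, hQa n i c]
    linear_combination -hsplit
  have sq_unfold : ∀ (n : Fin N) (h : ((m : Fin N) → Fin (I m)) → ℂ) (T : Finset (Fin (I n))),
      (∀ i c, h (insertAt n i c) = ∑ t ∈ T, u n i t * grow (sg n) (v n) t (e n c)) →
      sq h = ∑ t ∈ T, qrow (sg n) t := by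
    intro n h T hh
    have e1 : sq h = ∑ i, ∑ j, ‖∑ t ∈ T, u n i t * grow (sg n) (v n) t j‖ ^ 2 := by
      rw [sq, sum_insertAt n]
      refine Finset.sum_congr rfl fun i _ => ?_
      rw [← Equiv.sum_comp (e n)
        (fun j => ‖∑ t ∈ T, u n i t * grow (sg n) (v n) t j‖ ^ 2)]
      exact Finset.sum_congr rfl fun c _ => by rw [hh i c]
    rw [e1, sq_comb (u n) (hu2 n) _ T]
    exact Finset.sum_congr rfl fun t _ => grow_q _ _ (hv2 n) t
  have modebound1 : ∀ n : Fin N,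
      sq (a - Qop n (Pmat (I' n) (hI' n) (u n)) a)
        = ∑ t ∈ Finset.univ.filter (fun t : Fin (I n) => ¬ (t:ℕ) < I' n), qrow (sg n) t :=
    fun n => sq_unfold n _ _ (hRa n)
  have sqa : ∀ n : Fin N, sq a = ∑ t, qrow (sg n) t := by
    intro n
    exact sq_unfold n a Finset.univ (fun i c => hfact n i c)
  -- the partial products
  set F : ℕ → ((m : Fin N) → Fin (I m)) → ℂ := fun s idx => ∑ jdx, a jdx *
      ∏ n : Fin N, (if (n:ℕ) < s then Pmat (I' n) (hI' n) (u n) (idx n) (jdx n)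
        else if idx n = jdx n then 1 else 0) with hF
  have hF0 : F 0 = a := by
    funext idx
    simp only [hF, Nat.not_lt_zero, if_false]
    rw [Finset.sum_eq_single idx]
    · simp
    · intro jdx _ hne
      obtain ⟨n0, hn0⟩ := Function.ne_iff.mp hne
      rw [Finset.prod_eq_zero (Finset.mem_univ n0)
        (show (if idx n0 = jdx n0 then (1:ℂ) else 0) = 0 from if_neg (fun h => hn0 h.symm)),
        mul_zero]
    · intro h; exact absurd (Finset.mem_univ idx) h
  have hFN : F N = ahat := by
    funext idx
    rw [hahat idx]
    simp only [hF]
    refine Finset.sum_congr rfl fun jdx _ => ?_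
    congr 1
    exact Finset.prod_congr rfl fun n _ => if_pos n.isLt
  have hFstep : ∀ (s : ℕ) (hs : s < N),
      F (s+1) = Qop ⟨s, hs⟩ (Pmat (I' ⟨s,hs⟩) (hI' ⟨s,hs⟩) (u ⟨s,hs⟩)) (F s) := by
    intro s hs
    set nn : Fin N := ⟨s, hs⟩ with hnn
    funext idx
    symm
    have hprod_upd : ∀ (j : Fin (I nn)) (jdx : (m : Fin N) → Fin (I m)),
        (∏ n : Fin N, (if (n:ℕ) < s then Pmat (I' n) (hI' n) (u n) ((Function.update idx nn j) n) (jdx n)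
          else if (Function.update idx nn j) n = jdx n then 1 else 0))
        = (if j = jdx nn then 1 else 0)
          * ∏ n ∈ Finset.univ.erase nn,
              (if (n:ℕ) < s then Pmat (I' n) (hI' n) (u n) (idx n) (jdx n)
                else if idx n = jdx n then 1 else 0) := by
      intro j jdx
      rw [← Finset.mul_prod_erase Finset.univ _ (Finset.mem_univ nn)]
      congr 1
      · rw [if_neg (by simp [hnn]), Function.update_self]
      · refine Finset.prod_congr rfl fun n hn => ?_
        rw [Function.update_of_ne (Finset.mem_erase.mp hn).1]
    have hprod_succ : ∀ jdx : (m : Fin N) → Fin (I m),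
        (∏ n : Fin N, (if (n:ℕ) < s + 1 then Pmat (I' n) (hI' n) (u n) (idx n) (jdx n)
          else if idx n = jdx n then 1 else 0))
        = Pmat (I' nn) (hI' nn) (u nn) (idx nn) (jdx nn)
          * ∏ n ∈ Finset.univ.erase nn,
              (if (n:ℕ) < s then Pmat (I' n) (hI' n) (u n) (idx n) (jdx n)
                else if idx n = jdx n then 1 else 0) := by
      intro jdx
      rw [← Finset.mul_prod_erase Finset.univ _ (Finset.mem_univ nn)]
      congr 1
      · rw [if_pos (by simp [hnn])]
      · refine Finset.prod_congr rfl fun n hn => ?_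
        have hne : (n:ℕ) ≠ s := by
          intro h
          exact (Finset.mem_erase.mp hn).1 (Fin.ext (by simp [hnn, h]))
        have hiff : ((n:ℕ) < s + 1) ↔ ((n:ℕ) < s) := by omega
        simp only [hiff]
    calc Qop nn (Pmat (I' nn) (hI' nn) (u nn)) (F s) idx
        = ∑ j, Pmat (I' nn) (hI' nn) (u nn) (idx nn) j
            * ∑ jdx, a jdx * ((if j = jdx nn then 1 else 0)
              * ∏ n ∈ Finset.univ.erase nn,
                  (if (n:ℕ) < s then Pmat (I' n) (hI' n) (u n) (idx n) (jdx n)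
                    else if idx n = jdx n then 1 else 0)) := by
          simp only [Qop, hF]
          refine Finset.sum_congr rfl fun j _ => ?_
          congr 1
          refine Finset.sum_congr rfl fun jdx _ => ?_
          rw [hprod_upd j jdx]
      _ = ∑ jdx, a jdx * ((∑ j, Pmat (I' nn) (hI' nn) (u nn) (idx nn) j
              * (if j = jdx nn then 1 else 0))
            * ∏ n ∈ Finset.univ.erase nn,
                (if (n:ℕ) < s then Pmat (I' n) (hI' n) (u n) (idx n) (jdx n)
                  else if idx n = jdx n then 1 else 0)) := by
          simp only [Finset.mul_sum, Finset.sum_mul]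
          rw [Finset.sum_comm]
          exact Finset.sum_congr rfl fun jdx _ => Finset.sum_congr rfl fun j _ => by ring
      _ = ∑ jdx, a jdx * (Pmat (I' nn) (hI' nn) (u nn) (idx nn) (jdx nn)
            * ∏ n ∈ Finset.univ.erase nn,
                (if (n:ℕ) < s then Pmat (I' n) (hI' n) (u n) (idx n) (jdx n)
                  else if idx n = jdx n then 1 else 0)) := by
          refine Finset.sum_congr rfl fun jdx _ => ?_
          congr 2
          simp only [mul_ite, mul_one, mul_zero, Finset.sum_ite_eq', Finset.mem_univ, if_true]
      _ = F (s+1) idx := by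
          simp only [hF]
          refine Finset.sum_congr rfl fun jdx _ => ?_
          rw [hprod_succ jdx]
  set D : ℕ → ((m : Fin N) → Fin (I m)) → ℂ := fun s => F s - F (s+1) with hD
  have hQinv : ∀ (s t : ℕ) (hs : s < N), s < t → t ≤ N →
      Qop ⟨s,hs⟩ (Pmat (I' ⟨s,hs⟩) (hI' ⟨s,hs⟩) (u ⟨s,hs⟩)) (F t) = F t := by
    intro s t hs hst htN
    induction t with
    | zero => omega
    | succ t IH =>
      have htN' : t < N := htN
      rcases Nat.lt_or_ge s t with h | h
      · rw [hFstep t htN',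
          Qop_comm ⟨s,hs⟩ ⟨t,htN'⟩ (by simp [Fin.ext_iff]; omega),
          IH h (le_of_lt htN')]
      · have hst' : s = t := by omega
        subst hst'
        rw [hFstep s htN', Qop_idem _ _ (Pmat_idem _ _ _ (hu2 _))]
  have hDQ : ∀ (s t : ℕ) (hs : s < N), s < t → t < N →
      Qop ⟨s,hs⟩ (Pmat (I' ⟨s,hs⟩) (hI' ⟨s,hs⟩) (u ⟨s,hs⟩)) (D t) = D t := by
    intro s t hs hst htN
    simp only [hD]
    rw [Qop_sub, hQinv s t hs hst (le_of_lt htN), hQinv s (t+1) hs (by omega) (by omega)]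
  have hDs : ∀ (s : ℕ) (hs : s < N),
      Qop ⟨s,hs⟩ (Pmat (I' ⟨s,hs⟩) (hI' ⟨s,hs⟩) (u ⟨s,hs⟩)) (D s) = 0 := by
    intro s hs
    simp only [hD]
    rw [Qop_sub, hFstep s hs, Qop_idem _ _ (Pmat_idem _ _ _ (hu2 _)), sub_self]
  have horth : ∀ s t, s < t → t < N → ip (D s) (D t) = 0 := by
    intro s t hst htN
    have hs : s < N := lt_trans hst htN
    calc ip (D s) (D t)
        = ip (D s) (Qop ⟨s,hs⟩ (Pmat (I' ⟨s,hs⟩) (hI' ⟨s,hs⟩) (u ⟨s,hs⟩)) (D t)) := by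
          rw [hDQ s t hs hst htN]
      _ = ip (Qop ⟨s,hs⟩ (Pmat (I' ⟨s,hs⟩) (hI' ⟨s,hs⟩) (u ⟨s,hs⟩)) (D s)) (D t) :=
          (Qop_adj _ _ (Pmat_herm _ _ _) _ _).symm
      _ = 0 := by rw [hDs s hs]; exact ip_zero_left _
  have htel : a - ahat = ∑ t ∈ Finset.range N, D t := by
    funext idx
    rw [Finset.sum_apply]
    have hterm : ∀ t, D t idx = F t idx - F (t+1) idx := fun t => rfl
    simp only [hterm]
    rw [Finset.sum_range_sub' (fun t => F t idx) N]
    show a idx - ahat idx = F 0 idx - F N idx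
    rw [hF0, hFN]
  have hsq_split : sq (a - ahat) = ∑ t ∈ Finset.range N, sq (D t) := by
    rw [htel, sq_sum_orth D horth]
  have hDbound : ∀ (t : ℕ) (ht : t < N),
      sq (D t) ≤ sq (a - Qop ⟨t,ht⟩ (Pmat (I' ⟨t,ht⟩) (hI' ⟨t,ht⟩) (u ⟨t,ht⟩)) a) := by
    intro t ht
    have key : ∀ s, s ≤ t →
        sq (F s - Qop ⟨t,ht⟩ (Pmat (I' ⟨t,ht⟩) (hI' ⟨t,ht⟩) (u ⟨t,ht⟩)) (F s))
          ≤ sq (a - Qop ⟨t,ht⟩ (Pmat (I' ⟨t,ht⟩) (hI' ⟨t,ht⟩) (u ⟨t,ht⟩)) a) := by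
      intro s
      induction s with
      | zero => intro _; rw [hF0]
      | succ s IH =>
        intro hst
        have hsN : s < N := by omega
        have hsne : (⟨s,hsN⟩ : Fin N) ≠ ⟨t,ht⟩ := by simp [Fin.ext_iff]; omega
        rw [hFstep s hsN]
        calc sq (Qop ⟨s,hsN⟩ (Pmat (I' ⟨s,hsN⟩) (hI' ⟨s,hsN⟩) (u ⟨s,hsN⟩)) (F s)
              - Qop ⟨t,ht⟩ (Pmat (I' ⟨t,ht⟩) (hI' ⟨t,ht⟩) (u ⟨t,ht⟩))
                  (Qop ⟨s,hsN⟩ (Pmat (I' ⟨s,hsN⟩) (hI' ⟨s,hsN⟩) (u ⟨s,hsN⟩)) (F s)))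
            = sq (Qop ⟨s,hsN⟩ (Pmat (I' ⟨s,hsN⟩) (hI' ⟨s,hsN⟩) (u ⟨s,hsN⟩))
                (F s - Qop ⟨t,ht⟩ (Pmat (I' ⟨t,ht⟩) (hI' ⟨t,ht⟩) (u ⟨t,ht⟩)) (F s))) := by
              rw [Qop_comm ⟨t,ht⟩ ⟨s,hsN⟩ hsne.symm, Qop_sub]
          _ ≤ sq (F s - Qop ⟨t,ht⟩ (Pmat (I' ⟨t,ht⟩) (hI' ⟨t,ht⟩) (u ⟨t,ht⟩)) (F s)) :=
              Qop_contract _ _ (Pmat_herm _ _ _) (Pmat_idem _ _ _ (hu2 _)) _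
          _ ≤ _ := IH (by omega)
    have h2 : D t = F t - Qop ⟨t,ht⟩ (Pmat (I' ⟨t,ht⟩) (hI' ⟨t,ht⟩) (u ⟨t,ht⟩)) (F t) := by
      simp only [hD]
      rw [hFstep t ht]
    rw [h2]
    exact key t (le_refl t)
  constructor
  · rw [hsq_split, ← Fin.sum_univ_eq_sum_range (fun t => sq (D t)) N]
    refine Finset.sum_le_sum fun n _ => ?_
    have hb2 := hDbound n.1 n.2
    have hmb := modebound1 n
    exact le_trans hb2 (le_of_eq hmb)
  · intro b hb
    rw [hsq_split]
    have hmode2 : ∀ n : Fin N, sq (a - Qop n (Pmat (I' n) (hI' n) (u n)) a) ≤ sq (a - b) := by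
      intro n
      obtain ⟨v', w, hv', hbw⟩ := hb n
      set μ : Fin (I' n) → Fin (I n) → ℂ :=
        fun t' s => ∑ i, conj' (v' i t') * u n i s with hμ
      have hm : ∀ (t' : Fin (I' n)) (c : Cidx I n),
          (∑ i, conj' (v' i t') * a (insertAt n i c))
            = ∑ s, μ t' s * grow (sg n) (v n) s (e n c) := by
        intro t' c
        have : ∀ i, conj' (v' i t') * a (insertAt n i c)
            = ∑ s, (conj' (v' i t') * u n i s) * grow (sg n) (v n) s (e n c) := by
          intro i
          rw [hfact n i c, Finset.mul_sum]
          exact Finset.sum_congr rfl fun s _ => by ring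
        simp only [this]
        rw [Finset.sum_comm]
        refine Finset.sum_congr rfl fun s _ => ?_
        simp only [hμ, Finset.sum_mul]
      have hcol : ∀ c : Cidx I n,
          (∑ i, ‖a (insertAt n i c)‖^2)
            - ∑ t' : Fin (I' n), ‖∑ i, conj' (v' i t') * a (insertAt n i c)‖ ^ 2
          ≤ ∑ i, ‖a (insertAt n i c) - b (insertAt n i c)‖ ^ 2 := by
        intro c
        have := expand_lower (fun t' i => v' i t') hv'
          (fun i => a (insertAt n i c)) (fun t' => w t' c)
        refine le_trans this (le_of_eq ?_)
        unfold sq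
        refine Finset.sum_congr rfl fun i _ => ?_
        have hbeta : (fun i => a (insertAt n i c) - ∑ t : Fin (I' n), w t c * v' i t) i
            = a (insertAt n i c) - b (insertAt n i c) := by
          simp only []
          rw [hbw i c]
          congr 1
          exact Finset.sum_congr rfl fun t' _ => by ring
        rw [hbeta]
      have hglobal : sq a - ∑ t' : Fin (I' n),
          (∑ c : Cidx I n, ‖∑ i, conj' (v' i t') * a (insertAt n i c)‖ ^ 2)
          ≤ sq (a - b) := by
        have e1 : sq (a - b)
            = ∑ c : Cidx I n, ∑ i, ‖a (insertAt n i c) - b (insertAt n i c)‖ ^ 2 := by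
          rw [sq, sum_insertAt n, Finset.sum_comm]
          rfl
        have e2 : sq a = ∑ c : Cidx I n, ∑ i, ‖a (insertAt n i c)‖ ^ 2 := by
          rw [sq, sum_insertAt n, Finset.sum_comm]
        rw [e1, e2, Finset.sum_comm (s := (Finset.univ : Finset (Fin (I' n))))]
        rw [← Finset.sum_sub_distrib]
        exact Finset.sum_le_sum fun c _ => hcol c
      have hmval : ∀ t' : Fin (I' n),
          ∑ c : Cidx I n, ‖∑ i, conj' (v' i t') * a (insertAt n i c)‖ ^ 2
            = ∑ s, ‖μ t' s‖ ^ 2 * qrow (sg n) s := by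
        intro t'
        have e1 : ∑ c : Cidx I n, ‖∑ i, conj' (v' i t') * a (insertAt n i c)‖ ^ 2
            = ∑ j, ‖∑ s, μ t' s * grow (sg n) (v n) s j‖ ^ 2 := by
          rw [← Equiv.sum_comp (e n)
            (fun j => ‖∑ s, μ t' s * grow (sg n) (v n) s j‖ ^ 2)]
          exact Finset.sum_congr rfl fun c _ => by rw [hm t' c]
        rw [e1, sq_comb2 _ (grow_zero (sg n) (v n) (hv2 n) (hdiag n)) (μ t')]
        exact Finset.sum_congr rfl fun s _ => by rw [grow_q _ _ (hv2 n)]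
      set τ : Fin (I n) → ℝ := fun s => ∑ t' : Fin (I' n), ‖μ t' s‖ ^ 2 with hτ
      have hτ0 : ∀ s, 0 ≤ τ s := fun s => Finset.sum_nonneg fun _ _ => by positivity
      have hτ1 : ∀ s, τ s ≤ 1 := by
        intro s
        have hbes := bessel (fun t' i => v' i t') hv' (fun i => u n i s)
        calc τ s ≤ sq (fun i => u n i s) := hbes
          _ = 1 := col_norm_one (u n) (hu2 n) s
      have hrow : ∀ t' : Fin (I' n), ∑ s, ‖μ t' s‖ ^ 2 ≤ 1 := by
        intro t'
        have hbes := bessel (fun s i => conj' (u n i s)) (conj_row_orthonormal (u n) (hu2 n))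
          (fun i => conj' (v' i t'))
        have habs : ∀ s : Fin (I n),
            ‖∑ i, conj' (conj' (u n i s)) * conj' (v' i t')‖
              = ‖μ t' s‖ := by
          intro s
          have : (∑ i, conj' (conj' (u n i s)) * conj' (v' i t')) = μ t' s := by
            simp only [hμ, Complex.conj_conj]
            exact Finset.sum_congr rfl fun i _ => by ring
          rw [this]
        have hnorm : sq (fun i => conj' (v' i t')) = 1 := by
          have h1 := hv' t' t'
          rw [if_pos rfl] at h1
          have h2 : ((sq (fun i => conj' (v' i t')) : ℝ) : ℂ) = 1 := by
            have hdef : sq (fun i => conj' (v' i t'))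
                = ∑ i, ‖conj' (v' i t')‖ ^ 2 := rfl
            rw [hdef, sum_absSq_c, ← h1]
            exact Finset.sum_congr rfl fun i _ => by rw [Complex.conj_conj]; ring
          exact_mod_cast h2
        calc (∑ s, ‖μ t' s‖ ^ 2)
            = ∑ s, ‖∑ i, conj' (conj' (u n i s)) * conj' (v' i t')‖ ^ 2 :=
              (Finset.sum_congr rfl fun s _ => by rw [habs s]).symm
          _ ≤ sq (fun i => conj' (v' i t')) := hbes
          _ = 1 := hnorm
      have hτsum : ∑ s, τ s ≤ ((I' n : ℕ) : ℝ) := by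
        have hcomm : ∑ s, τ s = ∑ t' : Fin (I' n), ∑ s, ‖μ t' s‖ ^ 2 := by
          simp only [hτ]
          exact Finset.sum_comm
        rw [hcomm]
        calc ∑ t' : Fin (I' n), ∑ s, ‖μ t' s‖ ^ 2
            ≤ ∑ _t' : Fin (I' n), (1:ℝ) := Finset.sum_le_sum fun t' _ => hrow t'
          _ = ((I' n : ℕ) : ℝ) := by simp
      have hKF : ∑ s, qrow (sg n) s * τ s
          ≤ ∑ s ∈ Finset.univ.filter (fun s : Fin (I n) => (s:ℕ) < I' n), qrow (sg n) s :=
        sum_weight (qrow (sg n)) τ (I' n) (hI' n)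
          (fun i => Finset.sum_nonneg fun _ _ => by positivity) (hmono n) hτ0 hτ1 hτsum
      have hsum_m : ∑ t' : Fin (I' n), ∑ c : Cidx I n,
          ‖∑ i, conj' (v' i t') * a (insertAt n i c)‖ ^ 2
          = ∑ s, qrow (sg n) s * τ s := by
        calc ∑ t' : Fin (I' n), ∑ c : Cidx I n,
            ‖∑ i, conj' (v' i t') * a (insertAt n i c)‖ ^ 2
            = ∑ t' : Fin (I' n), ∑ s, ‖μ t' s‖ ^ 2 * qrow (sg n) s :=
              Finset.sum_congr rfl fun t' _ => hmval t'
          _ = ∑ s, ∑ t' : Fin (I' n), ‖μ t' s‖ ^ 2 * qrow (sg n) s :=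
              Finset.sum_comm
          _ = ∑ s, qrow (sg n) s * τ s := by
              refine Finset.sum_congr rfl fun s _ => ?_
              simp only [hτ]
              rw [Finset.mul_sum]
              exact Finset.sum_congr rfl fun t' _ => by ring
      rw [modebound1 n]
      have hsplit := Finset.sum_filter_add_sum_filter_not Finset.univ
        (fun s : Fin (I n) => (s:ℕ) < I' n) (qrow (sg n))
      have h1 := hglobal
      rw [hsum_m] at h1
      have h3 := sqa n
      linarith [hKF, h1, h3, hsplit]
    have hper : ∀ t ∈ Finset.range N, sq (D t) ≤ sq (a - b) := by
      intro t htm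
      have ht := Finset.mem_range.mp htm
      calc sq (D t)
          ≤ sq (a - Qop ⟨t,ht⟩ (Pmat (I' ⟨t,ht⟩) (hI' ⟨t,ht⟩) (u ⟨t,ht⟩)) a) := hDbound t ht
        _ ≤ sq (a - b) := hmode2 ⟨t,ht⟩
    calc ∑ t ∈ Finset.range N, sq (D t) ≤ ∑ _t ∈ Finset.range N, sq (a - b) :=
          Finset.sum_le_sum hper
      _ = N * sq (a - b) := by rw [Finset.sum_const, Finset.card_range, nsmul_eq_mul]

end TSlice

end TSliceNS


section Glue
open Complex Finset TSlice
local notation "conj'" => starRingEnd ℂ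
variable {p : ℕ} (L : TubalScalar p ≃ₗ[ℂ] TubalScalar p)

lemma tmul_slice (a b : TubalScalar p) (k : Fin p) :
    L (tmul L a b) k = L a k * L b k := by
  rw [tmul, LinearEquiv.apply_symm_apply]
  rfl

lemma tMul_slice {I J K : Type*} [Fintype J] (A : I → J → TubalScalar p)
    (B : J → K → TubalScalar p) (i : I) (kk : K) (k : Fin p) :
    L (tMul L A B i kk) k = ∑ j, L (A i j) k * L (B j kk) k := by
  simp only [tMul, map_sum, Finset.sum_apply]
  exact Finset.sum_congr rfl fun j _ => tmul_slice L _ _ k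

lemma tHerm_slice {I J : Type*} (A : I → J → TubalScalar p) (j : J) (i : I) (k : Fin p) :
    L (tHerm L A j i) k = conj' (L (A i j) k) := by
  show L (L.symm (star (L (A i j)))) k = conj' (L (A i j) k)
  rw [LinearEquiv.apply_symm_apply, Pi.star_apply, starRingEnd_apply]

lemma tId_slice {I : Type*} [DecidableEq I] (i j : I) (k : Fin p) :
    L (tId L i j) k = if i = j then 1 else 0 := by
  by_cases h : i = j
  · simp [tId, h]
  · simp [tId, h]

lemma partial_unitary_slice {I J : Type*} [Fintype I] [DecidableEq J]
    (A : I → J → TubalScalar p)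
    (hA : tMul L (tHerm L A) A = tId L) (k : Fin p) (t t' : J) :
    ∑ i, conj' (L (A i t) k) * L (A i t') k = if t = t' then 1 else 0 := by
  have h := congrFun (congrFun hA t) t'
  have h2 := congrArg (fun x : TubalScalar p => L x k) h
  rw [tMul_slice, tId_slice] at h2
  rw [← h2]
  exact Finset.sum_congr rfl fun i _ => by rw [tHerm_slice]

lemma multiProd_slice {N : ℕ} (I J : Fin N → ℕ)
    (S : ((m : Fin N) → Fin (I m)) → TubalScalar p)
    (Uu : (n : Fin N) → Fin (J n) → Fin (I n) → TubalScalar p)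
    (idx : (m : Fin N) → Fin (J m)) (k : Fin p) :
    L (multiProd L I J S Uu idx) k
      = ∑ jdx, L (S jdx) k * ∏ n, L (Uu n (idx n) (jdx n)) k := by
  simp only [multiProd, map_sum, Finset.sum_apply]
  refine Finset.sum_congr rfl fun jdx _ => ?_
  rw [LinearEquiv.apply_symm_apply, Pi.mul_apply]
  congr 1
  exact Finset.prod_apply k Finset.univ _

lemma qrow_slice {In Mn : ℕ} (S : Fin In → Fin Mn → TubalScalar p) (hd : fDiag S)
    (k : Fin p) (t : Fin In) :
    TSlice.qrow (fun a b => L (S a b) k) t = ‖L (sdiag S t) k‖ ^ 2 := by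
  unfold TSlice.qrow sdiag
  by_cases h : (t:ℕ) < Mn
  · rw [dif_pos h, Finset.sum_eq_single (⟨(t:ℕ), h⟩ : Fin Mn)]
    · intro b _ hb
      have hne : (t:ℕ) ≠ (b:ℕ) := fun hh => hb (Fin.ext hh.symm)
      show ‖L (S t b) k‖ ^ 2 = 0
      rw [hd t b hne, map_zero]
      simp
    · intro hh; exact absurd (Finset.mem_univ _) hh
  · rw [dif_neg h]
    have h0 : ∀ b : Fin Mn, S t b = 0 := fun b => hd t b (by have := b.isLt; omega)
    simp [h0]

lemma tnorm_sq {p : ℕ} {ι : Type*} [Fintype ι] (X : ι → TubalScalar p) :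
    tnorm X ^ 2 = ∑ i, ∑ k, ‖X i k‖ ^ 2 :=
  Real.sq_sqrt (Finset.sum_nonneg fun _ _ => Finset.sum_nonneg fun _ _ => by positivity)

lemma tnorm_nonneg {p : ℕ} {ι : Type*} [Fintype ι] (X : ι → TubalScalar p) :
    0 ≤ tnorm X := Real.sqrt_nonneg _

lemma tnormS_sq {p : ℕ} (x : TubalScalar p) :
    tnormS x ^ 2 = ∑ k, ‖x k‖ ^ 2 :=
  Real.sq_sqrt (Finset.sum_nonneg fun _ _ => by positivity)

end Glue

theorem truncated_hotSVD_error_bound {N : ℕ}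
    (L : TubalScalar p ≃ₗ[ℂ] TubalScalar p)
    (c : ℂ) (W : TubalScalar p →ₗ[ℂ] TubalScalar p) (hc : c ≠ 0)
    (hW : ∀ x y : TubalScalar p, ∑ k, star (W x k) * W y k = ∑ k, star (x k) * y k)
    (hLW : ∀ x, L x = c • W x)
    (I : Fin N → ℕ) (A : ((m : Fin N) → Fin (I m)) → TubalScalar p)
    (M : Fin N → ℕ) (e : (n : Fin N) → Cidx I n ≃ Fin (M n))
    (U : (n : Fin N) → Fin (I n) → Fin (I n) → TubalScalar p)
    (Sig : (n : Fin N) → Fin (I n) → Fin (M n) → TubalScalar p)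
    (V : (n : Fin N) → Fin (M n) → Fin (M n) → TubalScalar p)
    (hU : ∀ n, tUnitary L (U n)) (hV : ∀ n, tUnitary L (V n))
    (hdiag : ∀ n, fDiag (Sig n)) (hord : ∀ n, orderedDiag L (Sig n))
    (hfact : ∀ n, (fun i j => unfold I A n i ((e n).symm j))
        = tMul L (U n) (tMul L (Sig n) (tHerm L (V n))))
    (I' : Fin N → ℕ) (hI'1 : ∀ n, 1 ≤ I' n) (hI' : ∀ n, I' n ≤ I n) :
    tnorm (A - multiProd L I I A (fun n =>
        tMul L (fun i (j : Fin (I' n)) => U n i (Fin.castLE (hI' n) j))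
          (tHerm L (fun i (j : Fin (I' n)) => U n i (Fin.castLE (hI' n) j))))) ^ 2
      ≤ (∑ n : Fin N, ∑ i ∈ Finset.univ.filter (fun i : Fin (I n) => I' n ≤ (i : ℕ)),
          tnormS (sdiag (Sig n) i) ^ 2) ∧
    ∀ (S' : ((m : Fin N) → Fin (I' m)) → TubalScalar p)
      (V' : (n : Fin N) → Fin (I n) → Fin (I' n) → TubalScalar p),
      (∀ n, tMul L (tHerm L (V' n)) (V' n) = tId L) →
      tnorm (A - multiProd L I I A (fun n =>
          tMul L (fun i (j : Fin (I' n)) => U n i (Fin.castLE (hI' n) j))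
            (tHerm L (fun i (j : Fin (I' n)) => U n i (Fin.castLE (hI' n) j)))))
        ≤ Real.sqrt N * tnorm (A - multiProd L I' I S' V') := by
  classical
  set AH := multiProd L I I A (fun n =>
      tMul L (fun i (j : Fin (I' n)) => U n i (Fin.castLE (hI' n) j))
        (tHerm L (fun i (j : Fin (I' n)) => U n i (Fin.castLE (hI' n) j)))) with hAH
  -- slice-level data
  have hu2k : ∀ (k : Fin p) (n : Fin N) (i j : Fin (I n)),
      ∑ t, (starRingEnd ℂ) (L (U n t i) k) * L (U n t j) k = if i = j then 1 else 0 :=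
    fun k n => partial_unitary_slice L (U n) (hU n).2 k
  have hv2k : ∀ (k : Fin p) (n : Fin N) (i j : Fin (M n)),
      ∑ t, (starRingEnd ℂ) (L (V n t i) k) * L (V n t j) k = if i = j then 1 else 0 :=
    fun k n => partial_unitary_slice L (V n) (hV n).2 k
  have hdiagk : ∀ (k : Fin p) (n : Fin N) (i : Fin (I n)) (j : Fin (M n)),
      (i:ℕ) ≠ (j:ℕ) → L (Sig n i j) k = 0 := by
    intro k n i j h
    rw [hdiag n i j h, map_zero]
    rfl
  have hqrowk : ∀ (k : Fin p) (n : Fin N) (t : Fin (I n)),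
      TSlice.qrow (fun a b => L (Sig n a b) k) t = ‖L (sdiag (Sig n) t) k‖ ^ 2 :=
    fun k n => qrow_slice L (Sig n) (hdiag n) k
  have hmonok : ∀ (k : Fin p) (n : Fin N) (i j : Fin (I n)), i ≤ j →
      TSlice.qrow (fun a b => L (Sig n a b) k) j ≤ TSlice.qrow (fun a b => L (Sig n a b) k) i := by
    intro k n i j hij
    rw [hqrowk k n i, hqrowk k n j]
    obtain ⟨hpos, hmono'⟩ := hord n k
    have habs2 : ∀ (t : Fin (I n)),
        ‖L (sdiag (Sig n) t) k‖ ^ 2 = (L (sdiag (Sig n) t) k).re ^ 2 := by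
      intro t
      rw [Complex.sq_norm, Complex.normSq_apply, (hpos t).2]
      ring
    rw [habs2, habs2]
    have h1 := (hpos i).1
    have h2 := (hpos j).1
    have h3 := hmono' i j hij
    nlinarith
  have hfactk : ∀ (k : Fin p) (n : Fin N) (i : Fin (I n)) (c : Cidx I n),
      L (A (insertAt n i c)) k = ∑ t, (L (U n i t) k)
        * TSlice.grow (fun a b => L (Sig n a b) k) (fun a b => L (V n a b) k) t ((e n) c) := by
    intro k n i c
    have h := congrFun (congrFun (hfact n) i) ((e n) c)
    rw [Equiv.symm_apply_apply] at h
    have h2 := congrArg (fun x : TubalScalar p => L x k) h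
    rw [tMul_slice] at h2
    have h3 : L (A (insertAt n i c)) k = L (unfold I A n i c) k := rfl
    rw [h3, h2]
    refine Finset.sum_congr rfl fun t _ => ?_
    congr 1
    rw [tMul_slice]
    simp only [TSlice.grow]
    exact Finset.sum_congr rfl fun b _ => by rw [tHerm_slice]
  have hahatk : ∀ (k : Fin p) (idx : (m : Fin N) → Fin (I m)),
      L (AH idx) k = ∑ jdx, (L (A jdx) k)
        * ∏ n, TSlice.Pmat (I' n) (hI' n) (fun a b => L (U n a b) k) (idx n) (jdx n) := by
    intro k idx
    rw [hAH, multiProd_slice]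
    refine Finset.sum_congr rfl fun jdx _ => ?_
    congr 1
    refine Finset.prod_congr rfl fun n _ => ?_
    rw [tMul_slice]
    simp only [TSlice.Pmat]
    exact Finset.sum_congr rfl fun t _ => by rw [tHerm_slice]
  -- the per-slice theorem
  have hslice := fun (k : Fin p) => TSlice.slice_main (I := I)
    (fun idx => L (A idx) k) M e
    (fun n a b => L (U n a b) k) (fun n a b => L (Sig n a b) k) (fun n a b => L (V n a b) k)
    (hu2k k) (hv2k k) (hdiagk k) (hmonok k) (hfactk k) I' hI'
    (fun idx => L (AH idx) k) (hahatk k)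
  -- norm machinery
  have hWnorm : ∀ x : TubalScalar p,
      ∑ k, ‖W x k‖ ^ 2 = ∑ k, ‖x k‖ ^ 2 := by
    intro x
    have h := hW x x
    have h2 : ((∑ k, ‖W x k‖ ^ 2 : ℝ) : ℂ)
        = ((∑ k, ‖x k‖ ^ 2 : ℝ) : ℂ) := by
      rw [TSlice.sum_absSq_c, TSlice.sum_absSq_c]
      simp only [starRingEnd_apply]
      exact h
    exact_mod_cast h2
  have hLnorm : ∀ x : TubalScalar p,
      ∑ k, ‖L x k‖ ^ 2 = ‖c‖ ^ 2 * ∑ k, ‖x k‖ ^ 2 := by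
    intro x
    rw [← hWnorm x, Finset.mul_sum]
    refine Finset.sum_congr rfl fun k _ => ?_
    rw [hLW x, Pi.smul_apply, smul_eq_mul, norm_mul, mul_pow]
  have hsumX : ∀ (X : ((m : Fin N) → Fin (I m)) → TubalScalar p),
      ∑ k, TSlice.sq (fun idx => L (X idx) k) = ‖c‖ ^ 2 * tnorm X ^ 2 := by
    intro X
    rw [tnorm_sq, Finset.mul_sum]
    calc ∑ k, TSlice.sq (fun idx => L (X idx) k)
        = ∑ k, ∑ idx, ‖L (X idx) k‖ ^ 2 := rfl
      _ = ∑ idx, ∑ k, ‖L (X idx) k‖ ^ 2 := Finset.sum_comm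
      _ = ∑ idx, ‖c‖ ^ 2 * ∑ k, ‖X idx k‖ ^ 2 :=
          Finset.sum_congr rfl fun idx _ => hLnorm _
  have hdk : ∀ (X Y : ((m : Fin N) → Fin (I m)) → TubalScalar p) (k : Fin p),
      (fun idx => L (X idx) k) - (fun idx => L (Y idx) k) = fun idx => L ((X - Y) idx) k := by
    intro X Y k
    funext idx
    simp [Pi.sub_apply, map_sub]
  have hcpos : (0:ℝ) < ‖c‖ ^ 2 := by
    have : ‖c‖ ≠ 0 := by
      simpa using hc
    positivity
  have hfilter : ∀ n : Fin N,
      Finset.univ.filter (fun i : Fin (I n) => ¬ (i:ℕ) < I' n)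
        = Finset.univ.filter (fun i : Fin (I n) => I' n ≤ (i:ℕ)) := by
    intro n
    ext i
    simp [not_lt]
  constructor
  · -- Part 1
    have hk : ∀ k : Fin p, TSlice.sq (fun idx => L ((A - AH) idx) k)
        ≤ ∑ n, ∑ i ∈ Finset.univ.filter (fun i : Fin (I n) => ¬ (i:ℕ) < I' n),
            TSlice.qrow (fun a b => L (Sig n a b) k) i := by
      intro k
      have h := (hslice k).1
      rw [hdk A AH k] at h
      exact h
    have hsumk := Finset.sum_le_sum (fun k (_ : k ∈ Finset.univ) => hk k)
    rw [hsumX (A - AH)] at hsumk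
    have hrhs : ∑ k, ∑ n, ∑ i ∈ Finset.univ.filter (fun i : Fin (I n) => ¬ (i:ℕ) < I' n),
          TSlice.qrow (fun a b => L (Sig n a b) k) i
        = ‖c‖ ^ 2 * ∑ n, ∑ i ∈ Finset.univ.filter
            (fun i : Fin (I n) => I' n ≤ (i:ℕ)), tnormS (sdiag (Sig n) i) ^ 2 := by
      rw [Finset.sum_comm, Finset.mul_sum]
      refine Finset.sum_congr rfl fun n _ => ?_
      rw [← hfilter n, Finset.sum_comm, Finset.mul_sum]
      refine Finset.sum_congr rfl fun i _ => ?_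
      calc ∑ k, TSlice.qrow (fun a b => L (Sig n a b) k) i
          = ∑ k, ‖L (sdiag (Sig n) i) k‖ ^ 2 :=
            Finset.sum_congr rfl fun k _ => hqrowk k n i
        _ = ‖c‖ ^ 2 * ∑ k, ‖sdiag (Sig n) i k‖ ^ 2 := hLnorm _
        _ = ‖c‖ ^ 2 * tnormS (sdiag (Sig n) i) ^ 2 := by rw [tnormS_sq]
    rw [hrhs] at hsumk
    exact le_of_mul_le_mul_left hsumk hcpos
  · -- Part 2
    intro S' V' hVp
    set B := multiProd L I' I S' V' with hB
    have hv'k : ∀ (k : Fin p) (n : Fin N) (t t' : Fin (I' n)),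
        ∑ i, (starRingEnd ℂ) (L (V' n i t) k) * L (V' n i t') k = if t = t' then 1 else 0 :=
      fun k n => partial_unitary_slice L (V' n) (hVp n) k
    have hbk : ∀ (k : Fin p) (n : Fin N),
        ∃ (v' : Fin (I n) → Fin (I' n) → ℂ) (w : Fin (I' n) → Cidx I n → ℂ),
          (∀ t t', ∑ i, (starRingEnd ℂ) (v' i t) * v' i t' = if t = t' then 1 else 0) ∧
          ∀ i c, (fun idx => L (B idx) k) (insertAt n i c) = ∑ t, v' i t * w t c := by
      intro k n
      have h0n : 0 < I n := lt_of_lt_of_le (hI'1 n) (hI' n)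
      set i0 : Fin (I n) := ⟨0, h0n⟩ with hi0
      refine ⟨fun i t => L (V' n i t) k,
        fun t cc => ∑ jdx : (m : Fin N) → Fin (I' m),
          if jdx n = t then (L (S' jdx) k)
            * ∏ m ∈ Finset.univ.erase n, (L (V' m ((insertAt n i0 cc) m) (jdx m)) k)
          else 0,
        hv'k k n, ?_⟩
      intro i cc
      simp only []
      rw [hB, multiProd_slice]
      have hL : ∀ jdx : (m : Fin N) → Fin (I' m),
          (∏ m, L (V' m ((insertAt n i cc) m) (jdx m)) k)
            = (L (V' n i (jdx n)) k)
              * ∏ m ∈ Finset.univ.erase n, (L (V' m ((insertAt n i0 cc) m) (jdx m)) k) := by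
        intro jdx
        rw [← Finset.mul_prod_erase Finset.univ _ (Finset.mem_univ n)]
        congr 1
        · rw [TSlice.insertAt_self]
        · refine Finset.prod_congr rfl fun m hm => ?_
          have hmn : m ≠ n := (Finset.mem_erase.mp hm).1
          rw [TSlice.insertAt_other n _ _ m hmn, TSlice.insertAt_other n _ _ m hmn]
      have hR : ∑ t, (L (V' n i t) k) * ∑ jdx : (m : Fin N) → Fin (I' m),
            (if jdx n = t then (L (S' jdx) k)
              * ∏ m ∈ Finset.univ.erase n, (L (V' m ((insertAt n i0 cc) m) (jdx m)) k)
            else 0)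
          = ∑ jdx : (m : Fin N) → Fin (I' m), (L (V' n i (jdx n)) k)
              * ((L (S' jdx) k)
                * ∏ m ∈ Finset.univ.erase n, (L (V' m ((insertAt n i0 cc) m) (jdx m)) k)) := by
        simp only [Finset.mul_sum, mul_ite, mul_zero]
        rw [Finset.sum_comm]
        refine Finset.sum_congr rfl fun jdx _ => ?_
        simp only [Finset.sum_ite_eq, Finset.sum_ite_eq', Finset.mem_univ, if_true]
      rw [hR]
      refine Finset.sum_congr rfl fun jdx _ => ?_
      rw [hL jdx]
      ring
    have h2 := fun (k : Fin p) => (hslice k).2 (fun idx => L (B idx) k) (hbk k)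
    have hk2 : ∀ k : Fin p, TSlice.sq (fun idx => L ((A - AH) idx) k)
        ≤ N * TSlice.sq (fun idx => L ((A - B) idx) k) := by
      intro k
      have h := h2 k
      rw [hdk A AH k, hdk A B k] at h
      exact h
    have hsum2 := Finset.sum_le_sum (fun k (_ : k ∈ Finset.univ) => hk2 k)
    rw [hsumX (A - AH)] at hsum2
    have hrhs2 : ∑ k, (N : ℝ) * TSlice.sq (fun idx => L ((A - B) idx) k)
        = (N:ℝ) * (‖c‖ ^ 2 * tnorm (A - B) ^ 2) := by
      rw [← Finset.mul_sum, hsumX (A - B)]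
    rw [hrhs2] at hsum2
    have hfin : tnorm (A - AH) ^ 2 ≤ N * tnorm (A - B) ^ 2 := by
      have h' : ‖c‖ ^ 2 * tnorm (A - AH) ^ 2
          ≤ ‖c‖ ^ 2 * ((N:ℝ) * tnorm (A - B) ^ 2) := by
        calc ‖c‖ ^ 2 * tnorm (A - AH) ^ 2
            ≤ (N:ℝ) * (‖c‖ ^ 2 * tnorm (A - B) ^ 2) := hsum2
          _ = ‖c‖ ^ 2 * ((N:ℝ) * tnorm (A - B) ^ 2) := by ring
      exact le_of_mul_le_mul_left h' hcpos
    have h0 : 0 ≤ tnorm (A - B) := tnorm_nonneg _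
    calc tnorm (A - AH) = Real.sqrt (tnorm (A - AH) ^ 2) :=
          (Real.sqrt_sq (tnorm_nonneg _)).symm
      _ ≤ Real.sqrt ((N:ℝ) * tnorm (A - B) ^ 2) := Real.sqrt_le_sqrt hfin
      _ = Real.sqrt (N:ℝ) * Real.sqrt (tnorm (A - B) ^ 2) :=
          Real.sqrt_mul (by positivity) _
      _ = Real.sqrt (N:ℝ) * tnorm (A - B) := by rw [Real.sqrt_sq h0]
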